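/- arXiv:2306.12722 — 6 statements merged into one kernel-verified Lean document; each statement's English description precedes it below -/
import Mathlib

section
/- Quasi-best approximation for the discrete flux (abstract form of Lemma 4.5, first estimate): under the inf-sup condition and the consistency relation there exists a constant C > 0 depending only on the inf-sup constant c such that for every v ∈ Σ one has m(u − u_h, u − u_h)^{1/2} + s(u_h, u_h)^{1/2} + ‖e‖ ≤ C · ( m(u − v, u − v)^{1/2} + s(v, v)^{1/2} + ‖Dv − Du_h‖ ). -/
/-!
Write `d = v - u_h ∈ Σ`. Testing the consistency relation with `d` bounds the energy of `d`
by `‖Dd‖ ‖e‖` plus the approximation error of `v`, while testing it with the inf-sup partner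
`w` of `e` gives `c ‖e‖ ≤ m(u - u_h, u - u_h)^{1/2} + s(u_h, u_h)^{1/2}`. The triangle
inequality for the seminorms of `m` and `s` bounds the latter by the approximation error plus
the energy of `d`, and the resulting quadratic inequality for the energy of `d` closes the
estimate.
-/

namespace LinearMap.BilinForm.IsPosSemidef

variable {M : Type*} [AddCommGroup M] [Module ℝ M] {B : LinearMap.BilinForm ℝ M}

theorem abs_apply_le (hB : B.IsPosSemidef) (x y : M) :
    |B x y| ≤ √(B x x) * √(B y y) := by
  rw [← Real.sqrt_mul (hB.nonneg x)]
  exact Real.abs_le_sqrt (apply_sq_le_of_symm B hB.nonneg (isSymm_iff.mp hB.isSymm) x y)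

theorem sqrt_apply_add_le (hB : B.IsPosSemidef) (x y : M) :
    √(B (x + y) (x + y)) ≤ √(B x x) + √(B y y) := by
  rw [Real.sqrt_le_left (by positivity)]
  have hxy := (abs_le.mp (hB.abs_apply_le x y)).2
  have hyx : B y x = B x y := hB.isSymm.eq y x
  simp only [map_add, LinearMap.add_apply, hyx]
  nlinarith [Real.sq_sqrt (hB.nonneg x), Real.sq_sqrt (hB.nonneg y)]

theorem sqrt_apply_sub_le (hB : B.IsPosSemidef) (x y : M) :
    √(B (x - y) (x - y)) ≤ √(B x x) + √(B y y) := by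
  simpa only [sub_eq_add_neg, map_neg, LinearMap.neg_apply, neg_neg] using
    hB.sqrt_apply_add_le x (-y)

end LinearMap.BilinForm.IsPosSemidef

theorem le_one_add_add_mul_of_sq_le {t R p q : ℝ} (hR : 0 ≤ R) (hp : 0 ≤ p) (hq : 0 ≤ q)
    (h : t ^ 2 ≤ p * R * t + q * R ^ 2) : t ≤ (1 + p + q) * R := by
  rcases le_or_gt t R with htR | hRt
  · nlinarith [mul_nonneg (add_nonneg hp hq) hR]
  · have ht : 0 < t := hR.trans_lt hRt
    have htt : t * t ≤ (p + q) * R * t := by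
      nlinarith [mul_le_mul_of_nonneg_left hRt.le (mul_nonneg hq hR)]
    nlinarith [le_of_mul_le_mul_right htt ht]

/-- With `t = α + β` and `R = A' + B' + F` the hypotheses give
`t² ≤ 2κR² + 2(1 + κ)Rt`, whence `t ≤ (3 + 4κ)R`. -/
theorem add_add_le_of_energy_bounds {κ A B E A' B' F α β : ℝ} (hκ : 0 ≤ κ) (hA' : 0 ≤ A')
    (hB' : 0 ≤ B') (hF : 0 ≤ F) (hα : 0 ≤ α) (hβ : 0 ≤ β)
    (henergy : α ^ 2 + β ^ 2 ≤ F * E + A' * α + B' * β) (hE : E ≤ κ * (A + B))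
    (hA : A ≤ A' + α) (hB : B ≤ B' + β) :
    A + B + E ≤ 4 * (1 + κ) ^ 2 * (A' + B' + F) := by
  set R := A' + B' + F
  set t := α + β
  have hR : 0 ≤ R := by positivity
  have ht : 0 ≤ t := by positivity
  have hE' : E ≤ κ * (R + t) := hE.trans (mul_le_mul_of_nonneg_left (by linarith) hκ)
  have hFE : F * E ≤ κ * R * (R + t) := by
    nlinarith [mul_le_mul_of_nonneg_left hE' hF, mul_nonneg hκ (add_nonneg hR ht)]
  have hdata : A' * α + B' * β ≤ R * t := by nlinarith [mul_nonneg hF ht]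
  have htR : t ≤ (1 + 2 * (1 + κ) + 2 * κ) * R := by
    refine le_one_add_add_mul_of_sq_le hR (by positivity) (by positivity) ?_
    nlinarith [sq_nonneg (α - β)]
  calc A + B + E ≤ (1 + κ) * (R + t) := by nlinarith
    _ ≤ (1 + κ) * ((4 + 4 * κ) * R) := by gcongr; linarith
    _ = 4 * (1 + κ) ^ 2 * R := by ring

section QuasiBestApproximation

variable {X Q : Type*} [AddCommGroup X] [Module ℝ X] [NormedAddCommGroup Q]
  [InnerProductSpace ℝ Q] {Sig : Submodule ℝ X} {m s : LinearMap.BilinForm ℝ X}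
  {D : Sig →ₗ[ℝ] Q} {u : X} {uh : Sig} {e : Q}

theorem energy_le_of_consistency (hm : m.IsPosSemidef) (hs : s.IsPosSemidef)
    (hcons : ∀ w : Sig, m uh w + s uh w - m u w = inner ℝ (D w) e) (v : Sig) :
    m (v - uh) (v - uh) + s (v - uh) (v - uh) ≤
      ‖D v - D uh‖ * ‖e‖ + √(m (u - v) (u - v)) * √(m (v - uh) (v - uh))
        + √(s v v) * √(s (v - uh) (v - uh)) := by
  have hd : ((v - uh : Sig) : X) = v - uh := Submodule.coe_sub _ _ _
  calc m (v - uh) (v - uh) + s (v - uh) (v - uh)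
      = -inner ℝ (D v - D uh) e + -m (u - v) (v - uh) + s v (v - uh) := by
        rw [← map_sub, ← hcons (v - uh), hd]
        simp only [LinearMap.map_sub₂]
        ring
    _ ≤ _ := by
        gcongr ?_ + ?_ + ?_
        · exact (neg_le_abs _).trans (abs_real_inner_le_norm _ _)
        · exact (neg_le_abs _).trans (hm.abs_apply_le _ _)
        · exact (le_abs_self _).trans (hs.abs_apply_le _ _)

theorem mul_norm_le_of_infSup {c : ℝ} (hm : m.IsPosSemidef) (hs : s.IsPosSemidef)
    (hinfsup : ∀ p : Q, ∃ w : Sig,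
      √(m w w + s w w + ‖D w‖ ^ 2) = 1 ∧ c * ‖p‖ ≤ inner ℝ (D w) p)
    (hcons : ∀ w : Sig, m uh w + s uh w - m u w = inner ℝ (D w) e) :
    c * ‖e‖ ≤ √(m (u - uh) (u - uh)) + √(s uh uh) := by
  obtain ⟨w, hw_norm, hw_e⟩ := hinfsup e
  rw [Real.sqrt_eq_one] at hw_norm
  have hmw : √(m w w) ≤ 1 := Real.sqrt_le_one.mpr (by nlinarith [hs.nonneg w])
  have hsw : √(s w w) ≤ 1 := Real.sqrt_le_one.mpr (by nlinarith [hm.nonneg w])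
  calc c * ‖e‖ ≤ inner ℝ (D w) e := hw_e
    _ = -m (u - uh) w + s uh w := by rw [← hcons w, LinearMap.map_sub₂]; ring
    _ ≤ √(m (u - uh) (u - uh)) * √(m w w) + √(s uh uh) * √(s w w) :=
      add_le_add ((neg_le_abs _).trans (hm.abs_apply_le _ _))
        ((le_abs_self _).trans (hs.abs_apply_le _ _))
    _ ≤ √(m (u - uh) (u - uh)) + √(s uh uh) := by
      gcongr <;> exact mul_le_of_le_one_right (Real.sqrt_nonneg _) ‹_›

end QuasiBestApproximation

/-- Quasi-best approximation for the discrete flux (abstract form of Lemma 4.5,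
first estimate): under the inf-sup condition and the consistency relation there
exists a constant `C > 0` depending only on the inf-sup constant `c` such that
for every `v ∈ Σ`,
`m(u − u_h, u − u_h)^{1/2} + s(u_h, u_h)^{1/2} + ‖e‖
  ≤ C · ( m(u − v, u − v)^{1/2} + s(v, v)^{1/2} + ‖Dv − Du_h‖ )`. -/
theorem quasi_best_approximation_flux (c : ℝ) (hc : 0 < c) :
    ∃ C : ℝ, 0 < C ∧
      ∀ (X : Type) [AddCommGroup X] [Module ℝ X]
        (Q : Type) [NormedAddCommGroup Q] [InnerProductSpace ℝ Q]
        (Sig : Submodule ℝ X)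
        (m s : X →ₗ[ℝ] X →ₗ[ℝ] ℝ),
        (∀ x y : X, m x y = m y x) →
        (∀ x : X, 0 ≤ m x x) →
        (∀ x y : X, s x y = s y x) →
        (∀ x : X, 0 ≤ s x x) →
        ∀ (D : Sig →ₗ[ℝ] Q),
        -- inf-sup condition
        (∀ p : Q, ∃ w : Sig,
            Real.sqrt (m (w : X) (w : X) + s (w : X) (w : X) + ‖D w‖ ^ 2) = 1 ∧
            c * ‖p‖ ≤ (inner ℝ (D w) p : ℝ)) →
        ∀ (u : X) (uh : Sig) (e : Q),
        -- consistency relation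
        (∀ w : Sig,
            m (uh : X) (w : X) + s (uh : X) (w : X) - m u (w : X)
              = (inner ℝ (D w) e : ℝ)) →
        ∀ v : Sig,
          Real.sqrt (m (u - (uh : X)) (u - (uh : X)))
              + Real.sqrt (s (uh : X) (uh : X)) + ‖e‖
            ≤ C * (Real.sqrt (m (u - (v : X)) (u - (v : X)))
              + Real.sqrt (s (v : X) (v : X)) + ‖D v - D uh‖) := by
  refine ⟨4 * (1 + c⁻¹) ^ 2, by positivity, ?_⟩
  intro X _ _ Q _ _ Sig m s hm_symm hm_nonneg hs_symm hs_nonneg D hinfsup u uh e hcons v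
  have hm : LinearMap.BilinForm.IsPosSemidef m := ⟨⟨hm_symm⟩, ⟨hm_nonneg⟩⟩
  have hs : LinearMap.BilinForm.IsPosSemidef s := ⟨⟨hs_symm⟩, ⟨hs_nonneg⟩⟩
  have henergy := energy_le_of_consistency hm hs hcons v
  conv_lhs at henergy => rw [← Real.sq_sqrt (hm.nonneg _), ← Real.sq_sqrt (hs.nonneg _)]
  have hE : ‖e‖ ≤ c⁻¹ * (√(m (u - uh) (u - uh)) + √(s uh uh)) :=
    (le_inv_mul_iff₀ hc).mpr (mul_norm_le_of_infSup hm hs hinfsup hcons)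
  refine add_add_le_of_energy_bounds (inv_nonneg.mpr hc.le) (Real.sqrt_nonneg _)
    (Real.sqrt_nonneg _) (norm_nonneg _) (Real.sqrt_nonneg _) (Real.sqrt_nonneg _) henergy hE ?_ ?_
  · simpa only [sub_add_sub_cancel] using hm.sqrt_apply_add_le (u - v) (v - uh)
  · simpa only [sub_sub_cancel] using hs.sqrt_apply_sub_le v (v - uh)
end

section
/- Quasi-best approximation in the stronger norm (abstract form of Lemma 4.5, second estimate, case γ_u > 0): assume in addition that M : X × X → ℝ is a symmetric positive semidefinite bilinear form with m(x, x) ≤ M(x, x) for all x ∈ X and that there is a constant C_e > 0 with M(v, v) ≤ C_e² · (m(v, v) + s(v, v)) for all v ∈ Σ (abstracting the ghost-penalty norm equivalence (GP1b)). Then there exists a constant C > 0 depending only on c and C_e such that for every v ∈ Σ one has M(u − u_h, u − u_h)^{1/2} + s(u_h, u_h)^{1/2} + ‖e‖ ≤ C · ( M(u − v, u − v)^{1/2} + s(v, v)^{1/2} + ‖Dv − Du_h‖ ). -/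
/-!
Write `‖x‖_M := M(x,x)^{1/2}`, and put `d := v − u_h ∈ Σ` and `N := ‖d‖_{m,s}`.
Testing the consistency relation with `d` gives
`N² ≤ (‖u − v‖_M + s(v,v)^{1/2}) N + ‖Dv − Du_h‖ ‖e‖`, while testing it with the
inf-sup witness of `e` gives `c ‖e‖ ≤ ‖u − u_h‖_M + s(u_h,u_h)^{1/2}`, and the triangle
inequality together with (GP1b) bounds the latter by
`‖u − v‖_M + s(v,v)^{1/2} + (C_e + 1) N`. Eliminating `‖e‖` leaves a quadratic
inequality for `N`, which bounds `N`, hence everything.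
-/

open Real

namespace LinearMap.BilinForm

variable {X : Type*} [AddCommGroup X] [Module ℝ X] {B : LinearMap.BilinForm ℝ X}

theorem IsPosSemidef.abs_apply_le_sqrt_mul_sqrt (hB : B.IsPosSemidef) (x y : X) :
    |B x y| ≤ √(B x x) * √(B y y) := by
  rw [← sqrt_mul (hB.nonneg x)]
  exact abs_le_sqrt (B.apply_sq_le_of_symm hB.nonneg (isSymm_iff.mp hB.isSymm) x y)

theorem IsPosSemidef.apply_le_sqrt_mul_sqrt (hB : B.IsPosSemidef) (x y : X) :
    B x y ≤ √(B x x) * √(B y y) :=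
  (le_abs_self _).trans (hB.abs_apply_le_sqrt_mul_sqrt x y)

theorem IsPosSemidef.sqrt_apply_add_le_s1 (hB : B.IsPosSemidef) (x y : X) :
    √(B (x + y) (x + y)) ≤ √(B x x) + √(B y y) := by
  have hxy := hB.apply_le_sqrt_mul_sqrt x y
  have hexpand : B (x + y) (x + y) = B x x + 2 * B x y + B y y := by
    simp only [map_add, LinearMap.add_apply, hB.isSymm.eq y x]
    ring
  rw [sqrt_le_left (by positivity), hexpand, add_sq, sq_sqrt (hB.nonneg x),
    sq_sqrt (hB.nonneg y)]
  linarith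

theorem IsPosSemidef.sqrt_apply_sub_le_s1 (hB : B.IsPosSemidef) (x y : X) :
    √(B (x - y) (x - y)) ≤ √(B x x) + √(B y y) := by
  simpa [sub_eq_add_neg] using hB.sqrt_apply_add_le_s1 x (-y)

end LinearMap.BilinForm

theorem le_add_add_of_sq_le_mul_add_mul {x p q r : ℝ} (hp : 0 ≤ p) (hq : 0 ≤ q) (hr : 0 ≤ r)
    (h : x ^ 2 ≤ p * x + q * r) : x ≤ p + q + r := by
  by_contra! hx
  have hrx : q * r ≤ q * x := mul_le_mul_of_nonneg_left (by linarith) hq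
  nlinarith

noncomputable def quasiBestConst (c Ce : ℝ) : ℝ :=
  (1 + c⁻¹) * (1 + (Ce + 1) * (1 + (Ce + 1) / c))

theorem quasiBestConst_pos {c Ce : ℝ} (hc : 0 < c) (hCe : 0 ≤ Ce) :
    0 < quasiBestConst c Ce := by
  unfold quasiBestConst
  positivity

/-- `A`, `B`, `N`, `E`, `T` stand for `‖u − v‖_M + s(v,v)^{1/2}`, `‖Dv − Du_h‖`,
`‖v − u_h‖_{m,s}`, `‖e‖` and `‖u − u_h‖_M + s(u_h,u_h)^{1/2}`. -/
theorem add_le_quasiBestConst_mul {c Ce A B N E T : ℝ} (hc : 0 < c) (hCe : 0 ≤ Ce)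
    (hA : 0 ≤ A) (hB : 0 ≤ B) (hN : N ^ 2 ≤ A * N + B * E) (hE : c * E ≤ T)
    (hT : T ≤ A + (Ce + 1) * N) : T + E ≤ quasiBestConst c Ce * (A + B) := by
  have hET : E ≤ T / c := by rw [le_div_iff₀ hc]; linarith
  have hN' : N ^ 2 ≤ (A + B * (Ce + 1) / c) * N + B * (A / c) := by
    have hEA : E ≤ (A + (Ce + 1) * N) / c := hET.trans (by gcongr)
    have := mul_le_mul_of_nonneg_left hEA hB
    calc N ^ 2 ≤ A * N + B * ((A + (Ce + 1) * N) / c) := by linarith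
      _ = _ := by ring
  have hNAB : N ≤ (1 + (Ce + 1) / c) * (A + B) := by
    have hAc : A / c ≤ (Ce + 1) * A / c := by
      gcongr
      exact le_mul_of_one_le_left hA (by linarith)
    have := le_add_add_of_sq_le_mul_add_mul (by positivity) hB (by positivity) hN'
    have hexpand :
        (1 + (Ce + 1) / c) * (A + B) = A + B * (Ce + 1) / c + B + (Ce + 1) * A / c := by ring
    linarith
  calc T + E ≤ (1 + c⁻¹) * T := by rw [div_eq_mul_inv] at hET; linarith
    _ ≤ (1 + c⁻¹) * (A + (Ce + 1) * N) := by gcongr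
    _ ≤ (1 + c⁻¹) * ((A + B) + (Ce + 1) * ((1 + (Ce + 1) / c) * (A + B))) := by
        gcongr; linarith
    _ = quasiBestConst c Ce * (A + B) := by unfold quasiBestConst; ring

section Consistency

variable {X Q : Type*} [AddCommGroup X] [Module ℝ X] [NormedAddCommGroup Q]
  [InnerProductSpace ℝ Q] {Sig : Submodule ℝ X} {m s : LinearMap.BilinForm ℝ X}
  {D : Sig →ₗ[ℝ] Q} {u : X} {uh : Sig} {e : Q}

theorem add_apply_sub_le_of_consistency (hm : m.IsPosSemidef) (hs : s.IsPosSemidef)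
    (hcons : ∀ w : Sig, m uh w + s uh w - m u w = inner ℝ (D w) e) (v : Sig) :
    (m + s) (v - uh : X) (v - uh : X)
      ≤ (√(m (u - v) (u - v)) + √(s v v)) * √((m + s) (v - uh : X) (v - uh : X))
        + ‖D v - D uh‖ * ‖e‖ := by
  set d : X := v - uh
  set N := √((m + s) d d)
  have hmN : √(m d d) ≤ N := sqrt_le_sqrt (le_add_of_nonneg_right (hs.nonneg d))
  have hsN : √(s d d) ≤ N := sqrt_le_sqrt (le_add_of_nonneg_left (hm.nonneg d))
  have hsplit : (m + s) d d = -m (u - v) d + s v d - inner ℝ (D (v - uh)) e := by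
    rw [← hcons]
    simp only [d, Submodule.coe_sub, map_sub, LinearMap.sub_apply, LinearMap.add_apply]
    ring
  have hm' : -m (u - v) d ≤ √(m (u - v) (u - v)) * N :=
    ((neg_le_abs _).trans (hm.abs_apply_le_sqrt_mul_sqrt _ _)).trans
      (mul_le_mul_of_nonneg_left hmN (sqrt_nonneg _))
  have hs' : s v d ≤ √(s v v) * N :=
    (hs.apply_le_sqrt_mul_sqrt _ _).trans (mul_le_mul_of_nonneg_left hsN (sqrt_nonneg _))
  have hD : -inner ℝ (D (v - uh)) e ≤ ‖D v - D uh‖ * ‖e‖ := by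
    rw [map_sub D]
    exact (neg_le_abs _).trans (abs_real_inner_le_norm _ _)
  rw [hsplit]
  linarith

theorem mul_norm_le_of_infSup_of_consistency (hm : m.IsPosSemidef) (hs : s.IsPosSemidef)
    {c : ℝ} (hinfsup : ∀ p : Q, ∃ w : Sig,
      √(m w w + s w w + ‖D w‖ ^ 2) = 1 ∧ c * ‖p‖ ≤ inner ℝ (D w) p)
    (hcons : ∀ w : Sig, m uh w + s uh w - m u w = inner ℝ (D w) e) :
    c * ‖e‖ ≤ √(m (u - uh) (u - uh)) + √(s uh uh) := by
  obtain ⟨w, hw, hcw⟩ := hinfsup e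
  have hw' : m w w + s w w + ‖D w‖ ^ 2 = 1 := sqrt_eq_one.mp hw
  have hmw : √(m w w) ≤ 1 := sqrt_le_one.mpr (by nlinarith [hs.nonneg w, sq_nonneg ‖D w‖])
  have hsw : √(s w w) ≤ 1 := sqrt_le_one.mpr (by nlinarith [hm.nonneg w, sq_nonneg ‖D w‖])
  have hmu : -m (u - uh) w ≤ √(m (u - uh) (u - uh)) :=
    ((neg_le_abs _).trans (hm.abs_apply_le_sqrt_mul_sqrt _ _)).trans
      (mul_le_of_le_one_right (sqrt_nonneg _) hmw)
  have hsu : s uh w ≤ √(s uh uh) :=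
    (hs.apply_le_sqrt_mul_sqrt _ _).trans (mul_le_of_le_one_right (sqrt_nonneg _) hsw)
  calc c * ‖e‖ ≤ inner ℝ (D w) e := hcw
    _ = -m (u - uh) w + s uh w := by rw [← hcons, map_sub, LinearMap.sub_apply]; ring
    _ ≤ _ := add_le_add hmu hsu

end Consistency

/-- Quasi-best approximation in the stronger norm (abstract form of Lemma 4.5,
second estimate, case `γ_u > 0`): with an additional symmetric positive
semidefinite bilinear form `M` dominating `m` on `X` and dominated (on `Σ`) by
`C_e² · (m + s)`, there exists `C > 0` depending only on `c` and `C_e` such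
that for every `v ∈ Σ`,
`M(u − u_h, u − u_h)^{1/2} + s(u_h, u_h)^{1/2} + ‖e‖
  ≤ C · ( M(u − v, u − v)^{1/2} + s(v, v)^{1/2} + ‖Dv − Du_h‖ )`. -/
theorem quasi_best_approximation_flux_strong_norm
    (c : ℝ) (hc : 0 < c) (Ce : ℝ) (hCe : 0 < Ce) :
    ∃ C : ℝ, 0 < C ∧
      ∀ (X : Type) [AddCommGroup X] [Module ℝ X]
        (Q : Type) [NormedAddCommGroup Q] [InnerProductSpace ℝ Q]
        (Sig : Submodule ℝ X)
        (m s M : X →ₗ[ℝ] X →ₗ[ℝ] ℝ),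
        (∀ x y : X, m x y = m y x) →
        (∀ x : X, 0 ≤ m x x) →
        (∀ x y : X, s x y = s y x) →
        (∀ x : X, 0 ≤ s x x) →
        (∀ x y : X, M x y = M y x) →
        (∀ x : X, 0 ≤ M x x) →
        -- `m ≤ M` on all of `X`
        (∀ x : X, m x x ≤ M x x) →
        -- ghost-penalty norm equivalence (GP1b) on `Σ`
        (∀ v : Sig, M (v : X) (v : X)
            ≤ Ce ^ 2 * (m (v : X) (v : X) + s (v : X) (v : X))) →
        ∀ (D : Sig →ₗ[ℝ] Q),
        -- inf-sup condition
        (∀ p : Q, ∃ w : Sig,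
            Real.sqrt (m (w : X) (w : X) + s (w : X) (w : X) + ‖D w‖ ^ 2) = 1 ∧
            c * ‖p‖ ≤ (inner ℝ (D w) p : ℝ)) →
        ∀ (u : X) (uh : Sig) (e : Q),
        -- consistency relation
        (∀ w : Sig,
            m (uh : X) (w : X) + s (uh : X) (w : X) - m u (w : X)
              = (inner ℝ (D w) e : ℝ)) →
        ∀ v : Sig,
          Real.sqrt (M (u - (uh : X)) (u - (uh : X)))
              + Real.sqrt (s (uh : X) (uh : X)) + ‖e‖
            ≤ C * (Real.sqrt (M (u - (v : X)) (u - (v : X)))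
              + Real.sqrt (s (v : X) (v : X)) + ‖D v - D uh‖) := by
  refine ⟨quasiBestConst c Ce, quasiBestConst_pos hc hCe.le, ?_⟩
  intro X _ _ Q _ _ Sig m s M hmsym hmpos hssym hspos hMsym hMpos hmM hGP D hinfsup u uh e
    hcons v
  have hm : LinearMap.BilinForm.IsPosSemidef m := ⟨⟨hmsym⟩, ⟨hmpos⟩⟩
  have hs : LinearMap.BilinForm.IsPosSemidef s := ⟨⟨hssym⟩, ⟨hspos⟩⟩
  have hM : LinearMap.BilinForm.IsPosSemidef M := ⟨⟨hMsym⟩, ⟨hMpos⟩⟩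
  set N := √((m + s) (v - uh : X) (v - uh : X))
  have hN : N ^ 2 = (m + s) (v - uh : X) (v - uh : X) := sq_sqrt ((hm.add hs).nonneg _)
  have hMd : √(M (v - uh : X) (v - uh : X)) ≤ Ce * N := by
    rw [← sqrt_sq hCe.le, ← sqrt_mul (sq_nonneg Ce)]
    simpa using sqrt_le_sqrt (hGP (v - uh))
  have hsd : √(s (v - uh : X) (v - uh : X)) ≤ N :=
    sqrt_le_sqrt (le_add_of_nonneg_left (hmpos _))
  have hMuh : √(M (u - uh) (u - uh)) ≤ √(M (u - v) (u - v)) + Ce * N := by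
    simpa only [sub_add_sub_cancel] using
      (hM.sqrt_apply_add_le_s1 (u - v) (v - uh)).trans (by gcongr)
  have hsuh : √(s uh uh) ≤ √(s v v) + N := by
    simpa only [sub_sub_cancel] using (hs.sqrt_apply_sub_le_s1 v (v - uh)).trans (by gcongr)
  apply add_le_quasiBestConst_mul (N := N) hc hCe.le (by positivity) (norm_nonneg _)
  · rw [hN]
    exact (add_apply_sub_le_of_consistency hm hs hcons v).trans (by gcongr; exact hmM _)
  · exact (mul_norm_le_of_infSup_of_consistency hm hs hinfsup hcons).trans
      (by gcongr; exact hmM _)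
  · linarith
end

section
/- Pressure bound (abstract form of the first step (eq. phbarbound) in the proof of Lemma 4.5): under the inf-sup condition and the consistency relation, for every v ∈ Σ one has ‖e‖ ≤ (√2 / c) · ( m(u − v, u − v)^{1/2} + s(v, v)^{1/2} + ‖v − u_h‖_{m,s} ). -/
/-!
Test the consistency relation with the inf-sup function `w` of `e`, for which
`c ‖e‖ ≤ ⟪D w, e⟫` and `m(w, w) + s(w, w) ≤ 1`. Writing
`u_h − u = (v − u) + (u_h − v)`, the right-hand side of the consistency relation becomes
`m(v − u, w) + s(v, w) + (m + s)(u_h − v, w)`, and Cauchy–Schwarz for each of the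
semidefinite forms `m`, `s`, `m + s` bounds the three terms by the three square roots.
The factor `√2 ≥ 1` is then slack.
-/

namespace LinearMap.IsSymm

variable {X : Type*} [AddCommGroup X] [Module ℝ X] {B : X →ₗ[ℝ] X →ₗ[ℝ] ℝ}

lemma abs_apply_le_sqrt_of_apply_self_le_one (hB : B.IsSymm) (hpos : ∀ x, 0 ≤ B x x)
    {w : X} (hw : B w w ≤ 1) (x : X) : |B x w| ≤ √(B x x) :=
  Real.abs_le_sqrt <| (BilinForm.apply_sq_le_of_symm B hpos hB x w).trans <|
    mul_le_of_le_one_right (hpos x) hw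

end LinearMap.IsSymm

/-- Pressure bound (abstract form of the first step (eq. phbarbound) in the
proof of Lemma 4.5): under the inf-sup condition and the consistency relation,
for every `v ∈ Σ`,
`‖e‖ ≤ (√2 / c) · ( m(u − v, u − v)^{1/2} + s(v, v)^{1/2} + ‖v − u_h‖_{m,s} )`. -/
theorem pressure_bound
    (X : Type*) [AddCommGroup X] [Module ℝ X]
    (Q : Type*) [NormedAddCommGroup Q] [InnerProductSpace ℝ Q]
    (Sig : Submodule ℝ X)
    (m s : X →ₗ[ℝ] X →ₗ[ℝ] ℝ)
    (hm_symm : ∀ x y : X, m x y = m y x)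
    (hm_pos : ∀ x : X, 0 ≤ m x x)
    (hs_symm : ∀ x y : X, s x y = s y x)
    (hs_pos : ∀ x : X, 0 ≤ s x x)
    (D : Sig →ₗ[ℝ] Q)
    (c : ℝ) (hc : 0 < c)
    -- inf-sup condition
    (hinfsup : ∀ p : Q, ∃ w : Sig,
        Real.sqrt (m (w : X) (w : X) + s (w : X) (w : X) + ‖D w‖ ^ 2) = 1 ∧
        c * ‖p‖ ≤ (inner ℝ (D w) p : ℝ))
    (u : X) (uh : Sig) (e : Q)
    -- consistency relation
    (hconsist : ∀ w : Sig,
        m (uh : X) (w : X) + s (uh : X) (w : X) - m u (w : X)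
          = (inner ℝ (D w) e : ℝ)) :
    ∀ v : Sig,
      ‖e‖ ≤ (Real.sqrt 2 / c) *
        (Real.sqrt (m (u - (v : X)) (u - (v : X)))
          + Real.sqrt (s (v : X) (v : X))
          + Real.sqrt (m ((v : X) - (uh : X)) ((v : X) - (uh : X))
              + s ((v : X) - (uh : X)) ((v : X) - (uh : X)))) := by
  intro v
  obtain ⟨w, hw_unit, hw_inner⟩ := hinfsup e
  have hm : m.IsSymm := ⟨hm_symm⟩
  have hs : s.IsSymm := ⟨hs_symm⟩
  have hms_pos (x : X) : 0 ≤ (m + s) x x := add_nonneg (hm_pos x) (hs_pos x)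
  have hw : m w w + s w w + ‖D w‖ ^ 2 = 1 := Real.sqrt_eq_one.mp hw_unit
  have hDw := sq_nonneg ‖D w‖
  have hm_w1 : m w w ≤ 1 := by linarith [hs_pos w]
  have hs_w1 : s w w ≤ 1 := by linarith [hm_pos w]
  have hms_w1 : (m + s) w w ≤ 1 := by simp only [LinearMap.add_apply]; linarith
  have hm_w := hm.abs_apply_le_sqrt_of_apply_self_le_one hm_pos hm_w1 (u - v)
  have hs_w := hs.abs_apply_le_sqrt_of_apply_self_le_one hs_pos hs_w1 v
  have hms_w := (hm.add hs).abs_apply_le_sqrt_of_apply_self_le_one hms_pos hms_w1 (v - uh)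
  simp only [LinearMap.add_apply] at hms_w
  have hsplit : inner ℝ (D w) e = -m (u - v) w + s v w - (m (v - uh) w + s (v - uh) w) := by
    rw [← hconsist w]
    simp only [map_sub, LinearMap.sub_apply]
    ring
  have hce : c * ‖e‖ ≤ √(m (u - v) (u - v)) + √(s v v)
      + √(m (v - uh) (v - uh) + s (v - uh) (v - uh)) := by
    linarith [neg_le_abs (m (u - v) w), le_abs_self (s v w),
      neg_le_abs (m (v - uh) w + s (v - uh) w)]
  rw [div_mul_eq_mul_div, le_div_iff₀ hc, mul_comm]
  exact hce.trans (le_mul_of_one_le_left (by positivity) Real.one_lt_sqrt_two.le)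
end

section
/- Unique solvability and equivalence of the hybridized mixed system (abstract form of Lemma 6.1): for every linear functional ℓ : Σ → ℝ and every g ∈ Q there exists a unique triple (u, p, λ) ∈ Σ × Q × Λ such that a(u, v) + ⟨Dv, p⟩ + ⟨Jv, λ⟩ = ℓ(v) for all v ∈ Σ, ⟨Du, q⟩ = ⟨g, q⟩ for all q ∈ Q, and ⟨Ju, μ⟩ = 0 for all μ ∈ Λ. Moreover this solution satisfies Ju = 0 and Du = g, and the pair (u, p) solves the non-hybrid mixed problem: a(u, v) + ⟨Dv, p⟩ = ℓ(v) for all v ∈ ker J. -/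
/-! The hybridized system is a square linear system `Φ (u, p, λ) = (ℓ, g, 0)` with
`Φ (u, p, λ) = (a u + Dᵀ p + Jᵀ λ, D u, J u) ∈ Σ* × Q × Λ`; since `dim Σ* = dim Σ`, it suffices
to show that `Φ` is injective. If `Φ (u, p, λ) = 0`, testing with `v = u` gives `a(u, u) = 0`
with `u ∈ ker J ∩ ker D`, so `u = 0` by (iii); testing with `v ∈ ker J` and using (ii) gives
`p = 0`, and then (i) gives `λ = 0`. -/

open Module

section HybridOperator

variable {Sig Q Lam : Type*} [AddCommGroup Sig] [Module ℝ Sig]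
  [NormedAddCommGroup Q] [InnerProductSpace ℝ Q] [NormedAddCommGroup Lam] [InnerProductSpace ℝ Lam]
  (a : Sig →ₗ[ℝ] Sig →ₗ[ℝ] ℝ) (D : Sig →ₗ[ℝ] Q) (J : Sig →ₗ[ℝ] Lam)

noncomputable def hybridOperator : Sig × Q × Lam →ₗ[ℝ] Dual ℝ Sig × Q × Lam :=
  (a ∘ₗ LinearMap.fst ℝ Sig (Q × Lam)
      + D.dualMap ∘ₗ innerₗ Q ∘ₗ LinearMap.fst ℝ Q Lam ∘ₗ LinearMap.snd ℝ Sig (Q × Lam)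
      + J.dualMap ∘ₗ innerₗ Lam ∘ₗ LinearMap.snd ℝ Q Lam ∘ₗ LinearMap.snd ℝ Sig (Q × Lam)).prod
    ((D ∘ₗ LinearMap.fst ℝ Sig (Q × Lam)).prod (J ∘ₗ LinearMap.fst ℝ Sig (Q × Lam)))

variable {a D J}

@[simp]
lemma hybridOperator_apply_fst_apply (t : Sig × Q × Lam) (v : Sig) :
    (hybridOperator a D J t).1 v = a t.1 v + inner ℝ (D v) t.2.1 + inner ℝ (J v) t.2.2 := by
  simp [hybridOperator, real_inner_comm]

@[simp]
lemma hybridOperator_apply_snd (t : Sig × Q × Lam) :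
    (hybridOperator a D J t).2 = (D t.1, J t.1) :=
  rfl

lemma hybridOperator_eq_iff (t : Sig × Q × Lam) (ℓ : Dual ℝ Sig) (g : Q) :
    hybridOperator a D J t = (ℓ, g, 0) ↔
      (∀ v : Sig, a t.1 v + inner ℝ (D v) t.2.1 + inner ℝ (J v) t.2.2 = ℓ v) ∧
      (∀ q : Q, inner ℝ (D t.1) q = inner ℝ g q) ∧
      (∀ μ : Lam, inner ℝ (J t.1) μ = 0) := by
  simp only [Prod.ext_iff (x := hybridOperator a D J t), LinearMap.ext_iff,
    hybridOperator_apply_fst_apply, hybridOperator_apply_snd, Prod.mk.injEq,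
    ext_iff_inner_right ℝ (E := Q), ext_iff_inner_right ℝ (E := Lam), inner_zero_left]

lemma hybridOperator_injective (hJ_surj : Function.Surjective J)
    (hD_surj : ∀ q : Q, ∃ v : Sig, J v = 0 ∧ D v = q)
    (ha_def : ∀ v : Sig, J v = 0 → D v = 0 → a v v = 0 → v = 0) :
    Function.Injective (hybridOperator a D J) := by
  rw [← LinearMap.ker_eq_bot, LinearMap.ker_eq_bot']
  rintro ⟨u, p, lam⟩ h
  have hrow (v : Sig) : a u v + inner ℝ (D v) p + inner ℝ (J v) lam = 0 := by
    simpa using congr($h.1 v)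
  have hDu : D u = 0 := congr($h.2.1)
  have hJu : J u = 0 := congr($h.2.2)
  obtain rfl : u = 0 := ha_def u hJu hDu (by simpa [hDu, hJu] using hrow u)
  obtain rfl : p = 0 := by
    obtain ⟨v, hJv, rfl⟩ := hD_surj p
    simpa [hJv] using hrow v
  obtain rfl : lam = 0 := by
    obtain ⟨v, rfl⟩ := hJ_surj lam
    simpa using hrow v
  rfl

lemma hybridOperator_bijective [FiniteDimensional ℝ Sig] [FiniteDimensional ℝ Q]
    [FiniteDimensional ℝ Lam] (hinj : Function.Injective (hybridOperator a D J)) :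
    Function.Bijective (hybridOperator a D J) := by
  have hdim : finrank ℝ (Sig × Q × Lam) = finrank ℝ (Dual ℝ Sig × Q × Lam) := by
    simp only [finrank_prod, Subspace.dual_finrank_eq]
  exact ⟨hinj, (LinearMap.injective_iff_surjective_of_finrank_eq_finrank hdim).mp hinj⟩

end HybridOperator

theorem hybridized_mixed_wellposed_general
    (Sig : Type*) [NormedAddCommGroup Sig] [InnerProductSpace ℝ Sig]
    [FiniteDimensional ℝ Sig]
    (Q : Type*) [NormedAddCommGroup Q] [InnerProductSpace ℝ Q]
    [FiniteDimensional ℝ Q]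
    (Lam : Type*) [NormedAddCommGroup Lam] [InnerProductSpace ℝ Lam]
    [FiniteDimensional ℝ Lam]
    (a : Sig →ₗ[ℝ] Sig →ₗ[ℝ] ℝ)
    (D : Sig →ₗ[ℝ] Q) (J : Sig →ₗ[ℝ] Lam)
    -- (i) `J` is surjective
    (hJ_surj : Function.Surjective J)
    -- (ii) the restriction of `D` to `ker J` is surjective onto `Q`
    (hD_surj : ∀ q : Q, ∃ v : Sig, J v = 0 ∧ D v = q)
    -- (iii) `a` is positive definite on `ker J ∩ ker D`
    (ha_def : ∀ v : Sig, J v = 0 → D v = 0 → a v v = 0 → v = 0)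
    (ℓ : Sig →ₗ[ℝ] ℝ) (g : Q) :
    (∃! t : Sig × Q × Lam,
        (∀ v : Sig, a t.1 v + (inner ℝ (D v) t.2.1 : ℝ) + (inner ℝ (J v) t.2.2 : ℝ) = ℓ v) ∧
        (∀ q : Q, (inner ℝ (D t.1) q : ℝ) = (inner ℝ g q : ℝ)) ∧
        (∀ μ : Lam, (inner ℝ (J t.1) μ : ℝ) = 0)) ∧
    (∀ u : Sig, ∀ p : Q, ∀ lam : Lam,
        ((∀ v : Sig, a u v + (inner ℝ (D v) p : ℝ) + (inner ℝ (J v) lam : ℝ) = ℓ v) ∧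
         (∀ q : Q, (inner ℝ (D u) q : ℝ) = (inner ℝ g q : ℝ)) ∧
         (∀ μ : Lam, (inner ℝ (J u) μ : ℝ) = 0)) →
        (J u = 0 ∧ D u = g ∧
          ∀ v : Sig, J v = 0 → a u v + (inner ℝ (D v) p : ℝ) = ℓ v)) := by
  have hbij := hybridOperator_bijective (hybridOperator_injective hJ_surj hD_surj ha_def)
  refine ⟨(existsUnique_congr fun t => hybridOperator_eq_iff t ℓ g).mp (hbij.existsUnique _), ?_⟩
  intro u p lam hsol
  have hΦ := (hybridOperator_eq_iff (u, p, lam) ℓ g).mpr hsol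
  refine ⟨congr($hΦ.2.2), congr($hΦ.2.1), fun v hJv => ?_⟩
  simpa [hJv] using hsol.1 v

/-- Unique solvability and equivalence of the hybridized mixed system (abstract
form of Lemma 6.1): for every linear functional `ℓ : Σ → ℝ` and every `g ∈ Q`
there exists a unique triple `(u, p, λ)` solving the hybridized system;
moreover this solution satisfies `Ju = 0`, `Du = g`, and `(u, p)` solves the
non-hybrid mixed problem on `ker J`. -/
theorem hybridized_mixed_wellposed
    (Sig : Type*) [NormedAddCommGroup Sig] [InnerProductSpace ℝ Sig]
    [FiniteDimensional ℝ Sig]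
    (Q : Type*) [NormedAddCommGroup Q] [InnerProductSpace ℝ Q]
    [FiniteDimensional ℝ Q]
    (Lam : Type*) [NormedAddCommGroup Lam] [InnerProductSpace ℝ Lam]
    [FiniteDimensional ℝ Lam]
    (a : Sig →ₗ[ℝ] Sig →ₗ[ℝ] ℝ)
    (ha_symm : ∀ v w : Sig, a v w = a w v)
    (ha_pos : ∀ v : Sig, 0 ≤ a v v)
    (D : Sig →ₗ[ℝ] Q) (J : Sig →ₗ[ℝ] Lam)
    -- (i) `J` is surjective
    (hJ_surj : Function.Surjective J)
    -- (ii) the restriction of `D` to `ker J` is surjective onto `Q`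
    (hD_surj : ∀ q : Q, ∃ v : Sig, J v = 0 ∧ D v = q)
    -- (iii) `a` is positive definite on `ker J ∩ ker D`
    (ha_def : ∀ v : Sig, J v = 0 → D v = 0 → a v v = 0 → v = 0)
    (ℓ : Sig →ₗ[ℝ] ℝ) (g : Q) :
    (∃! t : Sig × Q × Lam,
        (∀ v : Sig, a t.1 v + (inner ℝ (D v) t.2.1 : ℝ) + (inner ℝ (J v) t.2.2 : ℝ) = ℓ v) ∧
        (∀ q : Q, (inner ℝ (D t.1) q : ℝ) = (inner ℝ g q : ℝ)) ∧
        (∀ μ : Lam, (inner ℝ (J t.1) μ : ℝ) = 0)) ∧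
    (∀ u : Sig, ∀ p : Q, ∀ lam : Lam,
        ((∀ v : Sig, a u v + (inner ℝ (D v) p : ℝ) + (inner ℝ (J v) lam : ℝ) = ℓ v) ∧
         (∀ q : Q, (inner ℝ (D u) q : ℝ) = (inner ℝ g q : ℝ)) ∧
         (∀ μ : Lam, (inner ℝ (J u) μ : ℝ) = 0)) →
        (J u = 0 ∧ D u = g ∧
          ∀ v : Sig, J v = 0 → a u v + (inner ℝ (D v) p : ℝ) = ℓ v)) :=
  hybridized_mixed_wellposed_general Sig Q Lam a D J hJ_surj hD_surj ha_def ℓ g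
end

section
/- Quasi-optimality of the stabilized projection (inequality (4.5) in the proof of Lemma 4.1, with explicit constant): if f_h ∈ V is a γ-stabilized projection of f ∈ H, then for every g ∈ V one has ‖f − f_h‖ + γ^{1/2}·|f_h|_j ≤ √2 · ( ‖f − g‖ + γ^{1/2}·|g|_j ). -/
/-! Galerkin orthogonality gives `a² + b² = ⟪f - f_h, f - g⟫ + γ j(f_h, g) ≤ a c + b d` for the
error terms `a = ‖f - f_h‖`, `b = γ^{1/2} |f_h|_j` and the competitor's `c = ‖f - g‖`,
`d = γ^{1/2} |g|_j`, by Cauchy–Schwarz for the inner product and for `j`. Hence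
`a² + b² ≤ c² + d²`, and `√2` is the price of passing between the `ℓ¹` and `ℓ²` norms on `ℝ²`. -/

open scoped RealInnerProductSpace

theorem add_le_sqrt_two_mul_add_of_sq_add_sq_le {a b c d : ℝ} (hc : 0 ≤ c) (hd : 0 ≤ d)
    (h : a ^ 2 + b ^ 2 ≤ a * c + b * d) : a + b ≤ √2 * (c + d) := by
  have hsq : a ^ 2 + b ^ 2 ≤ c ^ 2 + d ^ 2 := by
    nlinarith [sq_nonneg (a - c), sq_nonneg (b - d)]
  have hsq' : (a + b) ^ 2 ≤ (√2 * (c + d)) ^ 2 := by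
    rw [mul_pow, Real.sq_sqrt zero_le_two]
    nlinarith [sq_nonneg (a - b), mul_nonneg hc hd]
  exact le_of_sq_le_sq hsq' (by positivity)

namespace LinearMap.IsPosSemidef

variable {E : Type*} [AddCommGroup E] [Module ℝ E] {B : E →ₗ[ℝ] E →ₗ[ℝ] ℝ}

theorem apply_sq_le (hB : B.IsPosSemidef) (x y : E) : B x y ^ 2 ≤ B x x * B y y := by
  have hquad : ∀ t : ℝ, 0 ≤ B x x * (t * t) + 2 * B x y * t + B y y := fun t => by
    have h := hB.nonneg (t • x + y)
    have hsymm : B y x = B x y := hB.eq y x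
    simp only [map_add, map_smul, add_apply, smul_apply, smul_eq_mul, hsymm] at h
    linarith
  have := discrim_le_zero hquad
  rw [discrim] at this
  linarith

theorem apply_le_sqrt_mul_sqrt (hB : B.IsPosSemidef) (x y : E) :
    B x y ≤ √(B x x) * √(B y y) := by
  rw [← Real.sqrt_mul (hB.nonneg x)]
  exact Real.le_sqrt_of_sq_le (hB.apply_sq_le x y)

end LinearMap.IsPosSemidef

section StabilizedProjection

variable {H : Type*} [NormedAddCommGroup H] [InnerProductSpace ℝ H]
  {V : Submodule ℝ H} {j : H →ₗ[ℝ] H →ₗ[ℝ] ℝ} {γ : ℝ} {f fh : H}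

structure IsStabilizedProjection (V : Submodule ℝ H) (j : H →ₗ[ℝ] H →ₗ[ℝ] ℝ) (γ : ℝ)
    (f fh : H) : Prop where
  mem : fh ∈ V
  inner_add_eq : ∀ q ∈ V, ⟪fh, q⟫ + γ * j fh q = ⟪f, q⟫

namespace IsStabilizedProjection

theorem inner_sub_eq (h : IsStabilizedProjection V j γ f fh) {q : H} (hq : q ∈ V) :
    ⟪f - fh, q⟫ = γ * j fh q := by
  rw [inner_sub_left, ← h.inner_add_eq q hq]
  ring

theorem norm_sub_sq_add_eq (h : IsStabilizedProjection V j γ f fh) {g : H} (hg : g ∈ V) :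
    ‖f - fh‖ ^ 2 + γ * j fh fh = ⟪f - fh, f - g⟫ + γ * j fh g := by
  calc ‖f - fh‖ ^ 2 + γ * j fh fh = ⟪f - fh, (f - g) + (g - fh)⟫ + γ * j fh fh := by
        rw [sub_add_sub_cancel, real_inner_self_eq_norm_sq]
    _ = ⟪f - fh, f - g⟫ + γ * j fh g := by
        rw [inner_add_right, h.inner_sub_eq (V.sub_mem hg h.mem), map_sub]
        ring

theorem norm_sub_add_le (h : IsStabilizedProjection V j γ f fh) (hj : j.IsPosSemidef)
    (hγ : 0 ≤ γ) {g : H} (hg : g ∈ V) :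
    ‖f - fh‖ + √γ * √(j fh fh) ≤ √2 * (‖f - g‖ + √γ * √(j g g)) := by
  refine add_le_sqrt_two_mul_add_of_sq_add_sq_le (norm_nonneg _) (by positivity) ?_
  have hstab_sq : (√γ * √(j fh fh)) ^ 2 = γ * j fh fh := by
    rw [mul_pow, Real.sq_sqrt hγ, Real.sq_sqrt (hj.nonneg fh)]
  have hstab_mul : √γ * √(j fh fh) * (√γ * √(j g g)) = γ * (√(j fh fh) * √(j g g)) := by
    rw [mul_mul_mul_comm, Real.mul_self_sqrt hγ]
  rw [hstab_sq, h.norm_sub_sq_add_eq hg, hstab_mul]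
  gcongr
  · exact real_inner_le_norm _ _
  · exact hj.apply_le_sqrt_mul_sqrt fh g

end IsStabilizedProjection

end StabilizedProjection

theorem stabilized_projection_quasi_optimal_general
    (H : Type*) [NormedAddCommGroup H] [InnerProductSpace ℝ H]
    (V : Submodule ℝ H)
    (j : H →ₗ[ℝ] H →ₗ[ℝ] ℝ)
    (hj_symm : ∀ x y : H, j x y = j y x)
    (hj_pos : ∀ x : H, 0 ≤ j x x)
    (γ : ℝ) (hγ : 0 ≤ γ)
    (f fh : H) (hfh_mem : fh ∈ V)
    (hfh : ∀ q ∈ V, (inner ℝ fh q : ℝ) + γ * j fh q = (inner ℝ f q : ℝ)) :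
    ∀ g ∈ V,
      ‖f - fh‖ + Real.sqrt γ * Real.sqrt (j fh fh)
        ≤ Real.sqrt 2 * (‖f - g‖ + Real.sqrt γ * Real.sqrt (j g g)) :=
  fun _ hg => IsStabilizedProjection.norm_sub_add_le ⟨hfh_mem, hfh⟩
    { eq := hj_symm, nonneg := hj_pos } hγ hg

/-- Quasi-optimality of the stabilized projection (inequality (4.5) in the
proof of Lemma 4.1, with explicit constant): if `f_h ∈ V` is a γ-stabilized
projection of `f ∈ H`, then for every `g ∈ V`,
`‖f − f_h‖ + γ^{1/2}·|f_h|_j ≤ √2 · ( ‖f − g‖ + γ^{1/2}·|g|_j )`. -/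
theorem stabilized_projection_quasi_optimal
    (H : Type*) [NormedAddCommGroup H] [InnerProductSpace ℝ H]
    (V : Submodule ℝ H) [FiniteDimensional ℝ V]
    (j : H →ₗ[ℝ] H →ₗ[ℝ] ℝ)
    (hj_symm : ∀ x y : H, j x y = j y x)
    (hj_pos : ∀ x : H, 0 ≤ j x x)
    (γ : ℝ) (hγ : 0 ≤ γ)
    (f fh : H) (hfh_mem : fh ∈ V)
    (hfh : ∀ q ∈ V, (inner ℝ fh q : ℝ) + γ * j fh q = (inner ℝ f q : ℝ)) :
    ∀ g ∈ V,
      ‖f - fh‖ + Real.sqrt γ * Real.sqrt (j fh fh)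
        ≤ Real.sqrt 2 * (‖f - g‖ + Real.sqrt γ * Real.sqrt (j g g)) :=
  stabilized_projection_quasi_optimal_general H V j hj_symm hj_pos γ hγ f fh hfh_mem hfh
end

section
/- Duality bound for the stabilized projection (the product estimate in the proof of the −2-norm bound in Lemma 4.1, with constant 1): if f_h ∈ V is a γ-stabilized projection of f ∈ H and v* ∈ V is a γ-stabilized projection of v ∈ H, then |⟨f − f_h, v⟩| ≤ ( ‖f − f_h‖ + γ^{1/2}·|f_h|_j ) · ( ‖v − v*‖ + γ^{1/2}·|v*|_j ). -/
/-!
Testing the defining equation of `f_h` against `v* ∈ V` gives the Galerkin-type identity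
`⟨f - f_h, v⟩ = ⟨f - f_h, v - v*⟩ + γ j(f_h, v*)`. Cauchy–Schwarz for the inner product and for
the semi-inner product `j` bound the two terms by `‖f - f_h‖‖v - v*‖` and
`(γ^{1/2}|f_h|_j)(γ^{1/2}|v*|_j)`, whose sum is at most the product of the two sums.
-/

open RealInnerProductSpace

lemma LinearMap.BilinForm.abs_apply_le_sqrt_mul_sqrt {M : Type*} [AddCommGroup M] [Module ℝ M]
    (B : LinearMap.BilinForm ℝ M) (hs : ∀ x, 0 ≤ B x x) (hB : LinearMap.IsSymm B) (x y : M) :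
    |B x y| ≤ √(B x x) * √(B y y) := by
  rw [← Real.sqrt_mul (hs x)]
  exact Real.abs_le_sqrt (B.apply_sq_le_of_symm hs hB x y)

section StabilizedProjection

variable {H : Type*} [NormedAddCommGroup H] [InnerProductSpace ℝ H] {V : Submodule ℝ H}
  {j : H →ₗ[ℝ] H →ₗ[ℝ] ℝ} {γ : ℝ} {f fh : H}

lemma inner_sub_stabilizedProjection_of_mem
    (hfh : ∀ q ∈ V, ⟪fh, q⟫ + γ * j fh q = ⟪f, q⟫) {q : H} (hq : q ∈ V) :
    ⟪f - fh, q⟫ = γ * j fh q := by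
  rw [inner_sub_left, ← hfh q hq]
  ring

lemma inner_sub_stabilizedProjection_eq
    (hfh : ∀ q ∈ V, ⟪fh, q⟫ + γ * j fh q = ⟪f, q⟫) (v : H) {vs : H} (hvs : vs ∈ V) :
    ⟪f - fh, v⟫ = ⟪f - fh, v - vs⟫ + γ * j fh vs := by
  rw [inner_sub_right, inner_sub_stabilizedProjection_of_mem hfh hvs]
  ring

end StabilizedProjection

lemma mul_add_mul_le_add_mul_add {a b c d : ℝ} (ha : 0 ≤ a) (hb : 0 ≤ b) (hc : 0 ≤ c)
    (hd : 0 ≤ d) : a * c + b * d ≤ (a + b) * (c + d) := by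
  nlinarith [mul_nonneg ha hd, mul_nonneg hb hc]

theorem stabilized_projection_duality_bound_general
    (H : Type*) [NormedAddCommGroup H] [InnerProductSpace ℝ H]
    (V : Submodule ℝ H)
    (j : H →ₗ[ℝ] H →ₗ[ℝ] ℝ)
    (hj_symm : ∀ x y : H, j x y = j y x)
    (hj_pos : ∀ x : H, 0 ≤ j x x)
    (γ : ℝ) (hγ : 0 ≤ γ)
    (f fh : H)
    (hfh : ∀ q ∈ V, (inner ℝ fh q : ℝ) + γ * j fh q = (inner ℝ f q : ℝ))
    (v vs : H) (hvs_mem : vs ∈ V) :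
    |(inner ℝ (f - fh) v : ℝ)|
      ≤ (‖f - fh‖ + Real.sqrt γ * Real.sqrt (j fh fh))
        * (‖v - vs‖ + Real.sqrt γ * Real.sqrt (j vs vs)) := by
  have hj_cs : |j fh vs| ≤ √(j fh fh) * √(j vs vs) :=
    LinearMap.BilinForm.abs_apply_le_sqrt_mul_sqrt j hj_pos ⟨hj_symm⟩ fh vs
  calc |⟪f - fh, v⟫|
      = |⟪f - fh, v - vs⟫ + γ * j fh vs| := by
        rw [inner_sub_stabilizedProjection_eq hfh v hvs_mem]
    _ ≤ |⟪f - fh, v - vs⟫| + γ * |j fh vs| :=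
        (abs_add_le _ _).trans_eq (by rw [abs_mul, abs_of_nonneg hγ])
    _ ≤ ‖f - fh‖ * ‖v - vs‖ + γ * (√(j fh fh) * √(j vs vs)) := by
        gcongr
        exact abs_real_inner_le_norm _ _
    _ = ‖f - fh‖ * ‖v - vs‖ + (√γ * √(j fh fh)) * (√γ * √(j vs vs)) := by
        rw [mul_mul_mul_comm, Real.mul_self_sqrt hγ]
    _ ≤ _ := mul_add_mul_le_add_mul_add (norm_nonneg _) (by positivity) (norm_nonneg _)
        (by positivity)

/-- Duality bound for the stabilized projection (the product estimate in the
proof of the −2-norm bound in Lemma 4.1, with constant 1): if `f_h ∈ V` is a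
γ-stabilized projection of `f ∈ H` and `v* ∈ V` is a γ-stabilized projection
of `v ∈ H`, then
`|⟨f − f_h, v⟩| ≤ (‖f − f_h‖ + γ^{1/2}·|f_h|_j)·(‖v − v*‖ + γ^{1/2}·|v*|_j)`. -/
theorem stabilized_projection_duality_bound
    (H : Type*) [NormedAddCommGroup H] [InnerProductSpace ℝ H]
    (V : Submodule ℝ H) [FiniteDimensional ℝ V]
    (j : H →ₗ[ℝ] H →ₗ[ℝ] ℝ)
    (hj_symm : ∀ x y : H, j x y = j y x)
    (hj_pos : ∀ x : H, 0 ≤ j x x)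
    (γ : ℝ) (hγ : 0 ≤ γ)
    (f fh : H) (hfh_mem : fh ∈ V)
    (hfh : ∀ q ∈ V, (inner ℝ fh q : ℝ) + γ * j fh q = (inner ℝ f q : ℝ))
    (v vs : H) (hvs_mem : vs ∈ V)
    (hvs : ∀ q ∈ V, (inner ℝ vs q : ℝ) + γ * j vs q = (inner ℝ v q : ℝ)) :
    |(inner ℝ (f - fh) v : ℝ)|
      ≤ (‖f - fh‖ + Real.sqrt γ * Real.sqrt (j fh fh))
        * (‖v - vs‖ + Real.sqrt γ * Real.sqrt (j vs vs)) :=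
  stabilized_projection_duality_bound_general H V j hj_symm hj_pos γ hγ f fh hfh v vs hvs_mem
end
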